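/- Let g_0, g_1, ..., g_{n−1} ∈ F_{q^m} be linearly independent over F_q, with m ≥ n. Then the F_{q^m}-linear code generated by the (n−δ+1)×n matrix with rows (g_0^{q^i}, g_1^{q^i}, ..., g_{n−1}^{q^i}) for i = 0,...,n−δ, viewed as m×n matrices over F_q via coordinate expansion, has the property that every nonzero codeword has rank at least δ (Gabidulin codes are MRD). -/

import Mathlib

/-!
A codeword is `c = uG = (f g₀, …, f gₙ₋₁)` for the `q`-polynomial map `f x = ∑ uᵢ x^{qⁱ}`, which is
`F_q`-linear since `x ↦ x^{qⁱ}` is a power of the Frobenius. Its kernel consists of roots of a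
nonzero polynomial of degree at most `q^{n-δ}`, so it has at most `q^{n-δ}` elements and dimension
at most `n - δ`. The rank of the expansion of `c` is the dimension of the span of its entries,
i.e. of `f (span g)`, and since the `gⱼ` are independent, rank–nullity bounds it below by
`n - (n - δ) = δ`.
-/

/-- Expansion `Ψ` of a vector over the extension field `L` into a matrix over `F_q`. -/
noncomputable def expand {Fq L : Type*} [Field Fq] [Field L] [Algebra Fq L]
    {m n : ℕ} (b : Module.Basis (Fin m) Fq L) (v : Fin n → L) :
    Matrix (Fin m) (Fin n) Fq :=
  Matrix.of fun i j => b.repr (v j) i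

open Polynomial Module

section LinearizedPolynomial

variable {L : Type*} [CommRing L] {k : ℕ}

noncomputable def linearizedPoly (q : ℕ) (u : Fin k → L) : L[X] :=
  ∑ i, C (u i) * X ^ (q ^ (i : ℕ))

variable {q : ℕ}

theorem eval_linearizedPoly (u : Fin k → L) (x : L) :
    (linearizedPoly q u).eval x = ∑ i, u i * x ^ (q ^ (i : ℕ)) := by
  simp [linearizedPoly, eval_finsetSum]

theorem natDegree_linearizedPoly_le (hq : 0 < q) (u : Fin k → L) :
    (linearizedPoly q u).natDegree ≤ q ^ (k - 1) :=
  natDegree_sum_le_of_forall_le _ _ fun i _ =>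
    (natDegree_C_mul_X_pow_le _ _).trans (Nat.pow_le_pow_right hq (by omega))

theorem coeff_linearizedPoly_pow (hq : 1 < q) (u : Fin k → L) (i : Fin k) :
    (linearizedPoly q u).coeff (q ^ (i : ℕ)) = u i := by
  rw [linearizedPoly, finsetSum_coeff, Finset.sum_eq_single i]
  · simp
  · intro j _ hji
    rw [coeff_C_mul_X_pow, if_neg fun h => hji (Fin.ext (Nat.pow_right_injective hq h).symm)]
  · simp

theorem linearizedPoly_ne_zero (hq : 1 < q) {u : Fin k → L} (hu : u ≠ 0) :
    linearizedPoly q u ≠ 0 := by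
  obtain ⟨i, hi⟩ := Function.ne_iff.mp hu
  intro h
  exact hi (by rw [← coeff_linearizedPoly_pow hq u i, h, coeff_zero]; rfl)

end LinearizedPolynomial

section qLinearMap

variable (K : Type*) {L : Type*} [Field K] [Fintype K] [CommRing L] [Algebra K L] {k : ℕ}

noncomputable def qLinearMap (u : Fin k → L) : L →ₗ[K] L :=
  ∑ i, u i • (FiniteField.frobeniusAlgHom K L ^ (i : ℕ)).toLinearMap

theorem qLinearMap_apply (u : Fin k → L) (x : L) :
    qLinearMap K u x = ∑ i, u i * x ^ (Fintype.card K ^ (i : ℕ)) := by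
  simp [qLinearMap, AlgHom.coe_pow, FiniteField.coe_frobeniusAlgHom, pow_iterate]

theorem qLinearMap_apply_eq_eval (u : Fin k → L) (x : L) :
    qLinearMap K u x = (linearizedPoly (Fintype.card K) u).eval x := by
  rw [qLinearMap_apply, eval_linearizedPoly]

variable {K} [IsDomain L]

/-- `V` has `#K ^ finrank K V` elements, all of them roots of `P`. -/
theorem finrank_le_of_subset_roots {V : Submodule K L} {P : L[X]} (hP : P ≠ 0)
    (hV : (V : Set L) ⊆ {x | P.IsRoot x}) {d : ℕ} (hdeg : P.natDegree ≤ Fintype.card K ^ d) :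
    finrank K V ≤ d := by
  have hfin : (V : Set L).Finite := (P.finite_setOfPred_isRoot hP).subset hV
  have : Finite V := hfin.to_subtype
  have : Module.Finite K V := Module.Finite.of_finite
  have hcard : Nat.card V ≤ P.natDegree := by
    rw [← SetLike.coe_sort_coe, Nat.card_coe_set_eq, Set.ncard_eq_toFinset_card _ hfin]
    exact card_le_degree_of_subset_roots fun x hx =>
      (mem_roots hP).mpr (hV (hfin.mem_toFinset.mp hx))
  rw [Module.natCard_eq_pow_finrank (K := K), Nat.card_eq_fintype_card] at hcard
  exact (Nat.pow_le_pow_iff_right Fintype.one_lt_card).mp (hcard.trans hdeg)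

theorem finrank_ker_qLinearMap_le {u : Fin k → L} (hu : u ≠ 0) :
    finrank K (LinearMap.ker (qLinearMap K u)) ≤ k - 1 :=
  finrank_le_of_subset_roots (linearizedPoly_ne_zero Fintype.one_lt_card hu)
    (fun x hx => by simpa [IsRoot, ← qLinearMap_apply_eq_eval] using hx)
    (natDegree_linearizedPoly_le Fintype.card_pos u)

end qLinearMap

theorem rank_expand {K L : Type*} [Field K] [Field L] [Algebra K L] {m n : ℕ}
    (b : Basis (Fin m) K L) (v : Fin n → L) :
    (expand b v).rank = finrank K (Submodule.span K (Set.range v)) := by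
  have hcols : (expand b v).col = b.equivFun ∘ v := rfl
  rw [Matrix.rank_eq_finrank_span_cols, hcols, Set.range_comp, ← LinearEquiv.coe_coe,
    ← Submodule.map_span, LinearEquiv.finrank_map_eq]

theorem le_finrank_span_range_comp_add_finrank_ker {K V W : Type*} [Field K]
    [AddCommGroup V] [Module K V] [AddCommGroup W] [Module K W] {n : ℕ} {g : Fin n → V}
    (hg : LinearIndependent K g) (f : V →ₗ[K] W) [FiniteDimensional K (LinearMap.ker f)] :
    n ≤ finrank K (Submodule.span K (Set.range (f ∘ g))) + finrank K (LinearMap.ker f) := by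
  set ψ := Fintype.linearCombination K g
  have hψ : Function.Injective ψ := hg.fintypeLinearCombination_injective
  have hrange : LinearMap.range (f ∘ₗ ψ) = Submodule.span K (Set.range (f ∘ g)) := by
    rw [LinearMap.range_comp, Fintype.range_linearCombination, Submodule.map_span, Set.range_comp]
  have hker : finrank K (LinearMap.ker (f ∘ₗ ψ)) ≤ finrank K (LinearMap.ker f) := by
    rw [LinearMap.ker_comp, (Submodule.equivMapOfInjective ψ hψ _).finrank_eq]
    exact Submodule.finrank_mono (Submodule.map_comap_le ψ _)
  have := LinearMap.finrank_range_add_finrank_ker (f ∘ₗ ψ)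
  rw [finrank_fin_fun, hrange] at this
  omega

theorem stmt9_general (Fq L : Type*) [Field Fq] [Fintype Fq] [Field L] [Algebra Fq L]
    (m n δ : ℕ) (hδn : δ ≤ n)
    (b : Module.Basis (Fin m) Fq L)
    (g : Fin n → L) (hg : LinearIndependent Fq g)
    (G : Matrix (Fin (n - δ + 1)) (Fin n) L)
    (hG : ∀ i j, G i j = g j ^ (Fintype.card Fq ^ (i : ℕ))) :
    ∀ u : Fin (n - δ + 1) → L, Matrix.vecMul u G ≠ 0 →
      δ ≤ (expand b (Matrix.vecMul u G)).rank := by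
  intro u hu
  have hu0 : u ≠ 0 := by
    rintro rfl
    exact hu (Matrix.zero_vecMul G)
  have hcodeword : Matrix.vecMul u G = qLinearMap Fq u ∘ g := funext fun j => by
    simp [Matrix.vecMul, dotProduct, hG, qLinearMap_apply]
  have : FiniteDimensional Fq L := b.finiteDimensional_of_finite
  have hdim := le_finrank_span_range_comp_add_finrank_ker hg (qLinearMap Fq u)
  have hker := finrank_ker_qLinearMap_le (K := Fq) hu0
  rw [rank_expand, hcodeword]
  omega

/-- Gabidulin codes are MRD: if `g_0,…,g_{n-1} ∈ F_{q^m}` are `F_q`-linearly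
independent (`m ≥ n`) and `G` is the Moore matrix with rows `(g_j^{q^i})_j`,
`i = 0,…,n-δ`, then every nonzero codeword `uG`, expanded into an `m×n`
matrix over `F_q`, has rank at least `δ`. -/
theorem stmt9 (Fq L : Type*) [Field Fq] [Fintype Fq] [Field L] [Algebra Fq L]
    (m n δ : ℕ) (hδ : 1 ≤ δ) (hδn : δ ≤ n) (hnm : n ≤ m)
    (b : Module.Basis (Fin m) Fq L)
    (g : Fin n → L) (hg : LinearIndependent Fq g)
    (G : Matrix (Fin (n - δ + 1)) (Fin n) L)
    (hG : ∀ i j, G i j = g j ^ (Fintype.card Fq ^ (i : ℕ))) :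
    ∀ u : Fin (n - δ + 1) → L, Matrix.vecMul u G ≠ 0 →
      δ ≤ (expand b (Matrix.vecMul u G)).rank :=
  stmt9_general Fq L m n δ hδn b g hg G hG
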